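/- Let G ∈ 𝕆^{n×k} with tr(GᵀD) ≠ 0 be a local maximizer of η on 𝕆^{n×k}. Then tr(Kᵀ(GᵀAG − M(G))K) ≥ 0 for every real skew-symmetric k×k matrix K (i.e., K = −Kᵀ). -/

import Mathlib

open Matrix

/-- The objective `η(G) = tr(GᵀD)² / tr(GᵀAG)`. -/
noncomputable def eta {n k : ℕ} (A : Matrix (Fin n) (Fin n) ℝ)
    (D G : Matrix (Fin n) (Fin k) ℝ) : ℝ :=
  (Matrix.trace (Gᵀ * D)) ^ 2 / Matrix.trace (Gᵀ * A * G)

/-- `ξ(G) = tr(GᵀAG) / tr(GᵀD)`. -/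
noncomputable def xi {n k : ℕ} (A : Matrix (Fin n) (Fin n) ℝ)
    (D G : Matrix (Fin n) (Fin k) ℝ) : ℝ :=
  Matrix.trace (Gᵀ * A * G) / Matrix.trace (Gᵀ * D)

/-- `sym(B) = (B + Bᵀ)/2`. -/
noncomputable def symPart {k : ℕ} (B : Matrix (Fin k) (Fin k) ℝ) : Matrix (Fin k) (Fin k) ℝ :=
  (1 / 2 : ℝ) • (B + Bᵀ)

/-- `M(G) = sym(GᵀAG − ξ(G)·GᵀD)`. -/
noncomputable def Mmat {n k : ℕ} (A : Matrix (Fin n) (Fin n) ℝ)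
    (D G : Matrix (Fin n) (Fin k) ℝ) : Matrix (Fin k) (Fin k) ℝ :=
  symPart (Gᵀ * A * G - xi A D G • (Gᵀ * D))

/-- `E(G) = A − ξ(G)·(DGᵀ + GDᵀ)`. -/
noncomputable def Emat {n k : ℕ} (A : Matrix (Fin n) (Fin n) ℝ)
    (D G : Matrix (Fin n) (Fin k) ℝ) : Matrix (Fin n) (Fin n) ℝ :=
  A - xi A D G • (D * Gᵀ + G * Dᵀ)

/-- The Frobenius norm of a real matrix. -/
noncomputable def frobNorm {n k : ℕ} (M : Matrix (Fin n) (Fin k) ℝ) : ℝ :=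
  Real.sqrt (∑ i, ∑ j, (M i j) ^ 2)

/-- `G` is a local maximizer of `η` on the Stiefel manifold `𝕆^{n×k}`. -/
def IsLocalMaxEta {n k : ℕ} (A : Matrix (Fin n) (Fin n) ℝ)
    (D G : Matrix (Fin n) (Fin k) ℝ) : Prop :=
  Gᵀ * G = 1 ∧ ∃ ε > (0 : ℝ), ∀ G' : Matrix (Fin n) (Fin k) ℝ,
    G'ᵀ * G' = 1 → frobNorm (G' - G) < ε → eta A D G' ≤ eta A D G

/-!
Rotating `G` inside its column space along `t ↦ G exp(tK)`, `K` skew-symmetric, stays on the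
Stiefel manifold and keeps `τ = tr(GᵀAG)` fixed, so along this curve `η = f(t)² / τ` with
`f(t) = tr(exp(tK) DᵀG)`. A local maximum of `f²` at `0` forces
`(f²)''(0) = 2 (f'(0)² + f(0) f''(0)) ≤ 0`, hence `tr(GᵀD) · tr(K²DᵀG) ≤ 0`. On the other hand
`GᵀAG − M(G) = (ξ/2)(GᵀD + DᵀG)`, so the quadratic form in `K` equals
`−ξ · tr(K²DᵀG) = −τ · tr(GᵀD) tr(K²DᵀG) / tr(GᵀD)²`.
-/

open Filter Set Topology

theorem continuous_frobNorm {n k : ℕ} :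
    Continuous fun M : Matrix (Fin n) (Fin k) ℝ => frobNorm M := by
  unfold frobNorm
  fun_prop

theorem IsLocalMax.second_deriv_nonpos {f f' : ℝ → ℝ} {x c : ℝ} (h : IsLocalMax f x)
    (hf : ∀ t, HasDerivAt f (f' t) t) (hf' : HasDerivAt f' c x) : c ≤ 0 := by
  by_contra! hc
  have hx : f' x = 0 := h.hasDerivAt_eq_zero (hf x)
  have hpos : ∀ᶠ t in 𝓝[>] x, 0 < f' t := by
    filter_upwards [nhdsGT_le_nhdsNE x ((hasDerivAt_iff_tendsto_slope.1 hf').eventually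
      (eventually_gt_nhds hc)), self_mem_nhdsWithin] with t hslope (hxt : x < t)
    rwa [slope_def_field, hx, sub_zero, div_pos_iff_of_pos_right (sub_pos.2 hxt)] at hslope
  obtain ⟨u, hxu, hu⟩ :=
    mem_nhdsGT_iff_exists_Ioo_subset.1 (hpos.and (h.filter_mono nhdsWithin_le_nhds))
  have hmid : (x + u) / 2 ∈ Ioo x u := ⟨by linarith [hxu.out], by linarith [hxu.out]⟩
  obtain ⟨ξ, hξ, hslope⟩ := exists_hasDerivAt_eq_slope f f' hmid.1
    (HasDerivAt.continuousOn fun t _ => hf t) fun t _ => hf t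
  have hξpos := (hu ⟨hξ.1, hξ.2.trans hmid.2⟩).1
  rw [hslope, div_pos_iff_of_pos_right (sub_pos.2 hmid.1), sub_pos] at hξpos
  exact (hu hmid).2.not_gt hξpos

theorem mul_nonpos_of_isLocalMax_sq {f f' : ℝ → ℝ} {x c : ℝ}
    (hmax : IsLocalMax (fun t => f t ^ 2) x) (hf : ∀ t, HasDerivAt f (f' t) t)
    (hf' : HasDerivAt f' c x) : f x * c ≤ 0 := by
  simp only [sq] at hmax
  have := hmax.second_deriv_nonpos (fun t => (hf t).mul (hf t))
    ((hf'.mul (hf x)).add ((hf x).mul hf'))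
  nlinarith [sq_nonneg (f' x)]

section MatrixExp

variable {m : Type*} [Fintype m] [DecidableEq m]

open NormedSpace

theorem Matrix.hasDerivAt_trace_exp_smul_mul (K C : Matrix m m ℝ) (t : ℝ) :
    HasDerivAt (fun t : ℝ => trace (exp (t • K) * C)) (trace (exp (t • K) * (K * C))) t := by
  let : NormedRing (Matrix m m ℝ) := Matrix.linftyOpNormedRing
  let : NormedAlgebra ℝ (Matrix m m ℝ) := Matrix.linftyOpNormedAlgebra
  rw [← Matrix.mul_assoc]
  exact (LinearMap.toContinuousLinearMap (Matrix.traceLinearMap m ℝ ℝ)).hasFDerivAt.comp_hasDerivAt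
    t ((hasDerivAt_exp_smul_const K t).mul_const C)

theorem Matrix.continuous_exp_smul (K : Matrix m m ℝ) : Continuous fun t : ℝ => exp (t • K) := by
  let : NormedRing (Matrix m m ℝ) := Matrix.linftyOpNormedRing
  let : NormedAlgebra ℝ (Matrix m m ℝ) := Matrix.linftyOpNormedAlgebra
  exact continuous_iff_continuousAt.2 fun t => (hasDerivAt_exp_smul_const K t).continuousAt

theorem Matrix.transpose_exp_smul_mul_self {K : Matrix m m ℝ} (hK : Kᵀ = -K) (t : ℝ) :
    (exp (t • K))ᵀ * exp (t • K) = 1 := by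
  rw [← Matrix.exp_transpose, transpose_smul, hK, smul_neg,
    ← Matrix.exp_add_of_commute _ _ ((Commute.refl (t • K)).neg_left), neg_add_cancel, exp_zero]

end MatrixExp

theorem Matrix.transpose_mul_self_eq_one_mul {R l m : Type*} [CommRing R] [Fintype l] [Fintype m]
    [DecidableEq m] {G : Matrix l m R} {Q : Matrix m m R} (hG : Gᵀ * G = 1) (hQ : Qᵀ * Q = 1) :
    (G * Q)ᵀ * (G * Q) = 1 := by
  rw [transpose_mul, Matrix.mul_assoc, ← Matrix.mul_assoc Gᵀ, hG, Matrix.one_mul, hQ]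

theorem Matrix.trace_transpose_mul_add_transpose_mul {R m : Type*} [CommRing R] [Fintype m]
    {K : Matrix m m R} (hK : Kᵀ = -K) (B : Matrix m m R) :
    trace (Kᵀ * (B + Bᵀ) * K) = -2 * trace (K * (K * Bᵀ)) := by
  have hsymm : trace (Kᵀ * B * K) = trace (Kᵀ * Bᵀ * K) := by
    rw [← trace_transpose (Kᵀ * Bᵀ * K)]
    simp only [transpose_mul, transpose_transpose, Matrix.mul_assoc]
  rw [Matrix.mul_add, Matrix.add_mul, trace_add, hsymm, hK, Matrix.neg_mul, Matrix.neg_mul,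
    trace_neg, Matrix.mul_assoc, trace_mul_comm, Matrix.mul_assoc, trace_mul_comm,
    Matrix.mul_assoc]
  ring

section StiefelCurves

variable {n k : ℕ} {A : Matrix (Fin n) (Fin n) ℝ} {D G : Matrix (Fin n) (Fin k) ℝ}

theorem sub_Mmat_eq (hA : A.IsSymm) :
    Gᵀ * A * G - Mmat A D G = (xi A D G / 2) • (Gᵀ * D + (Gᵀ * D)ᵀ) := by
  have hW : (Gᵀ * A * G)ᵀ = Gᵀ * A * G := by
    rw [transpose_mul, transpose_mul, transpose_transpose, hA.eq, Matrix.mul_assoc]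
  rw [Mmat, symPart, transpose_sub, transpose_smul, hW]
  module

theorem eta_mul_of_transpose_mul_self {Q : Matrix (Fin k) (Fin k) ℝ} (hQ : Qᵀ * Q = 1) :
    eta A D (G * Q) = trace (Q * (Dᵀ * G)) ^ 2 / trace (Gᵀ * A * G) := by
  have hnum : trace ((G * Q)ᵀ * D) = trace (Q * (Dᵀ * G)) := by
    rw [← trace_transpose, transpose_mul, transpose_transpose, ← Matrix.mul_assoc,
      trace_mul_comm]
  have hden : trace ((G * Q)ᵀ * A * (G * Q)) = trace (Gᵀ * A * G) := by
    rw [transpose_mul, show Qᵀ * Gᵀ * A * (G * Q) = Qᵀ * (Gᵀ * A * G * Q) by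
      simp only [Matrix.mul_assoc], trace_mul_comm, Matrix.mul_assoc, mul_eq_one_comm.1 hQ,
      Matrix.mul_one]
  rw [eta, hnum, hden]

theorem IsLocalMaxEta.isLocalMax_comp (hG : IsLocalMaxEta A D G)
    {γ : ℝ → Matrix (Fin n) (Fin k) ℝ} {t₀ : ℝ} (hγ : ContinuousAt γ t₀) (hγt₀ : γ t₀ = G)
    (hγO : ∀ t, (γ t)ᵀ * γ t = 1) :
    IsLocalMax (fun t => eta A D (γ t)) t₀ := by
  obtain ⟨-, ε, hε, hmax⟩ := hG
  have hclose : Tendsto (fun t => frobNorm (γ t - G)) (𝓝 t₀) (𝓝 (frobNorm (γ t₀ - G))) :=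
    continuous_frobNorm.continuousAt.tendsto.comp (hγ.sub continuousAt_const)
  rw [hγt₀, sub_self, show frobNorm (0 : Matrix (Fin n) (Fin k) ℝ) = 0 by simp [frobNorm]]
    at hclose
  filter_upwards [hclose.eventually_lt_const hε] with t ht
  rw [hγt₀]
  exact hmax (γ t) (hγO t) ht

open NormedSpace in
theorem IsLocalMaxEta.trace_mul_trace_nonpos (hG : IsLocalMaxEta A D G)
    (hτ : 0 < trace (Gᵀ * A * G)) {K : Matrix (Fin k) (Fin k) ℝ} (hK : Kᵀ = -K) :
    trace (Gᵀ * D) * trace (K * (K * (Dᵀ * G))) ≤ 0 := by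
  have hQO := Matrix.transpose_exp_smul_mul_self hK
  have hηmax : IsLocalMax (fun t : ℝ => eta A D (G * exp (t • K))) 0 :=
    hG.isLocalMax_comp (continuous_const.matrix_mul (Matrix.continuous_exp_smul K)).continuousAt
      (by rw [zero_smul, exp_zero, Matrix.mul_one])
      fun t => Matrix.transpose_mul_self_eq_one_mul hG.1 (hQO t)
  have hsqmax : IsLocalMax (fun t : ℝ => trace (exp (t • K) * (Dᵀ * G)) ^ 2) 0 := by
    filter_upwards [hηmax] with t ht
    rwa [eta_mul_of_transpose_mul_self (hQO t), eta_mul_of_transpose_mul_self (hQO 0),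
      div_le_div_iff_of_pos_right hτ] at ht
  have := mul_nonpos_of_isLocalMax_sq hsqmax (Matrix.hasDerivAt_trace_exp_smul_mul K _)
    (Matrix.hasDerivAt_trace_exp_smul_mul K _ 0)
  rwa [zero_smul, exp_zero, Matrix.one_mul, Matrix.one_mul, ← trace_transpose, transpose_mul,
    transpose_transpose] at this

end StiefelCurves

theorem skew_quadratic_nonneg_of_localMax_general
    (n k : ℕ)
    (A : Matrix (Fin n) (Fin n) ℝ) (hA : A.PosDef)
    (D : Matrix (Fin n) (Fin k) ℝ)
    (G : Matrix (Fin n) (Fin k) ℝ)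
    (hloc : IsLocalMaxEta A D G) :
    ∀ K : Matrix (Fin k) (Fin k) ℝ, K = -Kᵀ →
      0 ≤ Matrix.trace (Kᵀ * (Gᵀ * A * G - Mmat A D G) * K) := by
  intro K hK
  have hKT : Kᵀ = -K := neg_eq_iff_eq_neg.1 hK.symm
  have hτ : 0 ≤ trace (Gᵀ * A * G) := by
    simpa [conjTranspose_eq_transpose_of_trivial] using
      (hA.posSemidef.conjTranspose_mul_mul_same G).trace_nonneg
  rw [sub_Mmat_eq (isHermitian_iff_isSymm.1 hA.1), Matrix.mul_smul, Matrix.smul_mul, trace_smul,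
    trace_transpose_mul_add_transpose_mul hKT, transpose_mul, transpose_transpose, smul_eq_mul, xi]
  rcases hτ.eq_or_lt with hτ0 | hτpos
  · simp [← hτ0]
  have haq := hloc.trace_mul_trace_nonpos hτpos hKT
  set a := trace (Gᵀ * D)
  set q := trace (K * (K * (Dᵀ * G)))
  have : trace (Gᵀ * A * G) / a / 2 * (-2 * q) = -(trace (Gᵀ * A * G) * (a * q) / a ^ 2) := by
    rcases eq_or_ne a 0 with ha | ha
    · simp [ha]
    · field_simp
  rw [this, neg_nonneg]
  exact div_nonpos_of_nonpos_of_nonneg (mul_nonpos_of_nonneg_of_nonpos hτ haq) (sq_nonneg a)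

/-- at a local maximizer `G` of `η` on `𝕆^{n×k}`,
`tr(Kᵀ(GᵀAG − M(G))K) ≥ 0` for every skew-symmetric `K ∈ ℝ^{k×k}`. -/
theorem skew_quadratic_nonneg_of_localMax
    (n k : ℕ) (hk1 : 1 ≤ k) (hkn : k < n)
    (A : Matrix (Fin n) (Fin n) ℝ) (hA : A.PosDef)
    (D : Matrix (Fin n) (Fin k) ℝ)
    (G : Matrix (Fin n) (Fin k) ℝ)
    (htr : Matrix.trace (Gᵀ * D) ≠ 0)
    (hloc : IsLocalMaxEta A D G) :
    ∀ K : Matrix (Fin k) (Fin k) ℝ, K = -Kᵀ →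
      0 ≤ Matrix.trace (Kᵀ * (Gᵀ * A * G - Mmat A D G) * K) :=
  skew_quadratic_nonneg_of_localMax_general n k A hA D G hloc
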